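/- arXiv:2511.21248 — 3 statements merged into one kernel-verified Lean document; each statement's English description precedes it below -/
import Mathlib

section
/- One-step recursive feasibility: assume there exists c₁ ∈ (0, c) such that {x : V_f(x) ≤ c₁} ⊆ X_f ⊖ B_{L̄^N η} and V_f(x) − V_f(f^ε(x, μ(x))) ≥ c − c₁ for every x ∈ X_f with V_f(x) ≥ c₁. Let x̂ ∈ S and let u⋆ = (u⋆₀,…,u⋆_{N−1}) be ε-admissible for x̂, with predicted states x⋆(i) := x^ε_{u⋆}(i;x̂). Then the shifted sequence u⁺ := (u⋆₁, …, u⋆_{N−1}, μ(x⋆(N))) is ε-admissible for the plant successor state x⁺ := f(x̂, u⋆₀), i.e., x^ε_{u⁺}(k;x⁺) ∈ S ⊖ B_{c̄(k)η} for k ∈ [1:N−1] and x^ε_{u⁺}(N;x⁺) ∈ X_f. -/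
noncomputable section

abbrev E (n : ℕ) := EuclideanSpace ℝ (Fin n)

/-- Predicted trajectory of the surrogate model. -/
def traj {n m : ℕ} (fe : E n → E m → E n) (x0 : E n) (u : ℕ → E m) : ℕ → E n
  | 0 => x0
  | k + 1 => fe (traj fe x0 u k) (u k)

/-- Pontryagin set difference `S ⊖ B_r`. -/
def pDiff {n : ℕ} (S : Set (E n)) (r : ℝ) : Set (E n) :=
  {x | ∀ z : E n, ‖z‖ ≤ r → x + z ∈ S}

/-- `c̄(k) = ∑_{i=0}^{k-1} L̄^i`. -/
def cbar (Lbar : ℝ) (k : ℕ) : ℝ := ∑ i ∈ Finset.range k, Lbar ^ i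

/-- Quadratic form `xᵀQx` on Euclidean space. -/
def qf {n : ℕ} (Q : Matrix (Fin n) (Fin n) ℝ) (x : E n) : ℝ :=
  dotProduct (WithLp.equiv 2 (Fin n → ℝ) x) (Q.mulVec (WithLp.equiv 2 (Fin n → ℝ) x))

/-- ε-admissibility of an input sequence `u` for initial state `xh`. -/
def Admissible {n m : ℕ} (fe : E n → E m → E n) (S Xf : Set (E n)) (U : Set (E m))
    (η Lbar : ℝ) (N : ℕ) (xh : E n) (u : ℕ → E m) : Prop :=
  (∀ k < N, u k ∈ U) ∧
  (∀ k, 1 ≤ k → k < N → traj fe xh u k ∈ pDiff S (cbar Lbar k * η)) ∧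
  traj fe xh u N ∈ Xf

/-- MPC cost functional. -/
def JN {n m M : ℕ} (fe : E n → E m → E n) (Q : Matrix (Fin n) (Fin n) ℝ)
    (R : Matrix (Fin m) (Fin m) ℝ) (P : Matrix (Fin M) (Fin M) ℝ) (Φ : E n → E M)
    (N : ℕ) (xh : E n) (u : ℕ → E m) : ℝ :=
  ∑ i ∈ Finset.range N, (qf Q (traj fe xh u i) + qf R (u i)) + qf P (Φ (traj fe xh u N))

/-- Optimal value function. -/
def VN {n m M : ℕ} (fe : E n → E m → E n) (S Xf : Set (E n)) (U : Set (E m))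
    (η Lbar : ℝ) (Q : Matrix (Fin n) (Fin n) ℝ) (R : Matrix (Fin m) (Fin m) ℝ)
    (P : Matrix (Fin M) (Fin M) ℝ) (Φ : E n → E M) (N : ℕ) (xh : E n) : ℝ :=
  sInf (JN fe Q R P Φ N xh '' {u | Admissible fe S Xf U η Lbar N xh u})

/-! The shifted sequence is steered from the plant successor `x⁺`, which lies within `η` of the
predicted state `x⋆(1)`, and the surrogate's Lipschitz bound makes the two predicted trajectories
diverge by at most `L̄ᵏ η` after `k` steps. The constraint tightening by `c̄(k + 1) η = c̄(k) η + L̄ᵏ η`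
absorbs this divergence, and at the end the margin assumption puts `f^ε(x⋆(N), μ(x⋆(N)))` in the
sublevel set `{V_f ≤ c₁}`, whose `L̄ᴺ η`-neighbourhood lies in `X_f`. -/

lemma cbar_succ (L : ℝ) (k : ℕ) : cbar L (k + 1) = cbar L k + L ^ k :=
  Finset.sum_range_succ _ k

lemma cbar_nonneg {L : ℝ} (hL : 0 ≤ L) (k : ℕ) : 0 ≤ cbar L k :=
  Finset.sum_nonneg fun i _ => pow_nonneg hL i

lemma pow_le_cbar_succ {L : ℝ} (hL : 0 ≤ L) (k : ℕ) : L ^ k ≤ cbar L (k + 1) := by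
  rw [cbar_succ]
  linarith [cbar_nonneg hL k]

lemma qf_nonneg {n : ℕ} {Q : Matrix (Fin n) (Fin n) ℝ} (hQ : Q.PosDef) (x : E n) : 0 ≤ qf Q x :=
  hQ.posSemidef.dotProduct_mulVec_nonneg _

section PontryaginDifference

variable {n : ℕ} {S : Set (E n)} {x y : E n} {r d : ℝ}

lemma pDiff_anti (h : r ≤ d) : pDiff S d ⊆ pDiff S r :=
  fun _ hx z hz => hx z (hz.trans h)

lemma mem_of_mem_pDiff (hx : x ∈ pDiff S r) (hr : 0 ≤ r) : x ∈ S := by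
  simpa using hx 0 (by simpa using hr)

lemma mem_pDiff_sub_of_norm_sub_le (hx : x ∈ pDiff S r) (hxy : ‖y - x‖ ≤ d) :
    y ∈ pDiff S (r - d) := by
  intro z hz
  have hnorm : ‖(y - x) + z‖ ≤ r :=
    calc ‖(y - x) + z‖ ≤ ‖y - x‖ + ‖z‖ := norm_add_le _ _
      _ ≤ r := by linarith
  convert hx _ hnorm using 1
  abel

lemma mem_of_mem_pDiff_of_norm_sub_le (hx : x ∈ pDiff S r) (hxy : ‖y - x‖ ≤ r) : y ∈ S :=
  mem_of_mem_pDiff (mem_pDiff_sub_of_norm_sub_le hx hxy) (sub_self r).ge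

end PontryaginDifference

section Trajectories

variable {n m : ℕ} {fe : E n → E m → E n} {S : Set (E n)} {U : Set (E m)} {L : ℝ}

lemma norm_traj_sub_le (hL : 0 ≤ L)
    (hLip : ∀ u ∈ U, ∀ x ∈ S, ∀ y ∈ S, ‖fe x u - fe y u‖ ≤ L * ‖x - y‖)
    {x y : E n} {u : ℕ → E m} {δ : ℝ} (hxy : ‖y - x‖ ≤ δ) :
    ∀ k, (∀ i < k, u i ∈ U) → (∀ i < k, traj fe x u i ∈ pDiff S (L ^ i * δ)) →
      ‖traj fe y u k - traj fe x u k‖ ≤ L ^ k * δ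
  | 0, _, _ => by simpa [traj] using hxy
  | k + 1, hu, htube => by
    have ih := norm_traj_sub_le hL hLip hxy k (fun i hi => hu i (by omega))
      (fun i hi => htube i (by omega))
    have hδ : 0 ≤ L ^ k * δ := (norm_nonneg _).trans ih
    have hxS := mem_of_mem_pDiff (htube k k.lt_succ_self) hδ
    have hyS := mem_of_mem_pDiff_of_norm_sub_le (htube k k.lt_succ_self) ih
    calc ‖traj fe y u (k + 1) - traj fe x u (k + 1)‖
        ≤ L * ‖traj fe y u k - traj fe x u k‖ := hLip _ (hu k k.lt_succ_self) _ hyS _ hxS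
      _ ≤ L * (L ^ k * δ) := mul_le_mul_of_nonneg_left ih hL
      _ = L ^ (k + 1) * δ := by ring

end Trajectories

def shiftAppend {α : Type*} (u : ℕ → α) (N : ℕ) (a : α) : ℕ → α :=
  fun k => if k + 1 < N then u (k + 1) else a

section ShiftAppend

variable {n m : ℕ} {fe : E n → E m → E n} {x : E n} {u : ℕ → E m} {N : ℕ} {a : E m}

lemma shiftAppend_mem {α : Type*} {A : Set α} {u : ℕ → α} {a : α}
    (hu : ∀ k < N, u k ∈ A) (ha : a ∈ A) (k : ℕ) : shiftAppend u N a k ∈ A := by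
  unfold shiftAppend
  split_ifs with hk
  exacts [hu _ hk, ha]

lemma traj_shiftAppend_of_lt :
    ∀ k < N, traj fe (fe x (u 0)) (shiftAppend u N a) k = traj fe x u (k + 1)
  | 0, _ => rfl
  | k + 1, hk => by
    rw [traj, traj_shiftAppend_of_lt k (by omega), shiftAppend, if_pos hk]
    rfl

lemma traj_shiftAppend_self (hN : 1 ≤ N) :
    traj fe (fe x (u 0)) (shiftAppend u N a) N = fe (traj fe x u N) a := by
  obtain ⟨K, rfl⟩ := Nat.exists_eq_add_of_le' hN
  rw [traj, traj_shiftAppend_of_lt K K.lt_succ_self, shiftAppend, if_neg (lt_irrefl _)]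

end ShiftAppend

section Admissible

variable {n m : ℕ} {fe : E n → E m → E n} {S Xf : Set (E n)} {U : Set (E m)} {η L : ℝ}
  {N : ℕ} {x : E n} {u : ℕ → E m}

lemma Admissible.traj_mem_pDiff (hadm : Admissible fe S Xf U η L N x u)
    (hXfS : Xf ⊆ pDiff S (cbar L N * η)) {j : ℕ} (hj₁ : 1 ≤ j) (hjN : j ≤ N) :
    traj fe x u j ∈ pDiff S (cbar L j * η) := by
  rcases hjN.lt_or_eq with hjN | rfl
  exacts [hadm.2.1 j hj₁ hjN, hXfS hadm.2.2]

lemma Admissible.traj_shiftAppend_mem_pDiff (hadm : Admissible fe S Xf U η L N x u)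
    (hXfS : Xf ⊆ pDiff S (cbar L N * η)) (a : E m) {k : ℕ} (hk : k < N) :
    traj fe (fe x (u 0)) (shiftAppend u N a) k ∈ pDiff S (cbar L (k + 1) * η) := by
  rw [traj_shiftAppend_of_lt k hk]
  exact hadm.traj_mem_pDiff hXfS k.succ_pos hk

end Admissible

lemma qf_terminal_succ_le {n m M : ℕ} {fe : E n → E m → E n} {Q : Matrix (Fin n) (Fin n) ℝ}
    {R : Matrix (Fin m) (Fin m) ℝ} {P : Matrix (Fin M) (Fin M) ℝ} {Φ : E n → E M}
    {μ : E n → E m} {c c₁ : ℝ} (hQ : Q.PosDef) (hR : R.PosDef)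
    (hμdec : ∀ x ∈ {x | qf P (Φ x) ≤ c},
      qf P (Φ (fe x (μ x))) - qf P (Φ x) ≤ -(qf Q x + qf R (μ x)))
    (hmargin : ∀ x ∈ {x | qf P (Φ x) ≤ c}, c₁ ≤ qf P (Φ x) →
      c - c₁ ≤ qf P (Φ x) - qf P (Φ (fe x (μ x))))
    {x : E n} (hx : qf P (Φ x) ≤ c) :
    qf P (Φ (fe x (μ x))) ≤ c₁ := by
  have hdec := hμdec x hx
  -- Below `c₁` the nonnegative stage cost keeps `V_f` below `c₁`; above it the margin applies.
  rcases le_or_gt c₁ (qf P (Φ x)) with hlarge | hsmall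
  · linarith [hmargin x hx hlarge]
  · linarith [qf_nonneg hQ x, qf_nonneg hR (μ x)]

theorem one_step_recursive_feasibility_general
    {n m M : ℕ} (S : Set (E n)) (U : Set (E m))
    (f fe : E n → E m → E n)
    (cx cu η : ℝ) (hη : 0 ≤ η)
    (herr : ∀ x ∈ S, ∀ u ∈ U, ‖f x u - fe x u‖ ≤ min (cx * ‖x‖ + cu * ‖u‖) η)
    (Lbar : ℝ) (hL : 1 ≤ Lbar)
    (hLip : ∀ u ∈ U, ∀ x ∈ S, ∀ y ∈ S, ‖fe x u - fe y u‖ ≤ Lbar * ‖x - y‖)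
    (Q : Matrix (Fin n) (Fin n) ℝ) (R : Matrix (Fin m) (Fin m) ℝ)
    (hQ : Q.PosDef) (hR : R.PosDef)
    (P : Matrix (Fin M) (Fin M) ℝ)
    (Φ : E n → E M)
    (c : ℝ) (N : ℕ) (hN : 1 ≤ N)
    (Xf : Set (E n)) (hXf : Xf = {x | qf P (Φ x) ≤ c})
    (hXfS : Xf ⊆ pDiff S (cbar Lbar N * η))
    (μ : E n → E m) (hμU : ∀ x ∈ Xf, μ x ∈ U)
    (hμdec : ∀ x ∈ Xf,
      qf P (Φ (fe x (μ x))) - qf P (Φ x) ≤ -(qf Q x + qf R (μ x)))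
    -- Assumption (iii): uniform decrease margin with sublevel set inside the
    -- tightened terminal set
    (hc₁ : ∃ c₁, 0 < c₁ ∧ c₁ < c ∧
      {x | qf P (Φ x) ≤ c₁} ⊆ pDiff Xf (Lbar ^ N * η) ∧
      ∀ x ∈ Xf, c₁ ≤ qf P (Φ x) →
        c - c₁ ≤ qf P (Φ x) - qf P (Φ (fe x (μ x))))
    (xh : E n) (hxh : xh ∈ S) (ustar : ℕ → E m)
    (hadm : Admissible fe S Xf U η Lbar N xh ustar) :
    Admissible fe S Xf U η Lbar N (f xh (ustar 0))
      (fun k => if k + 1 < N then ustar (k + 1) else μ (traj fe xh ustar N)) := by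
  obtain ⟨c₁, -, -, hsub, hmargin⟩ := hc₁
  change Admissible fe S Xf U η Lbar N _ (shiftAppend ustar N (μ (traj fe xh ustar N)))
  set uplus := shiftAppend ustar N (μ (traj fe xh ustar N))
  have hL₀ : 0 ≤ Lbar := zero_le_one.trans hL
  have hinputs : ∀ k, uplus k ∈ U := shiftAppend_mem hadm.1 (hμU _ hadm.2.2)
  have htube (k : ℕ) (hk : k < N) : traj fe (fe xh (ustar 0)) uplus k ∈ pDiff S (Lbar ^ k * η) :=
    pDiff_anti (mul_le_mul_of_nonneg_right (pow_le_cbar_succ hL₀ k) hη)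
      (hadm.traj_shiftAppend_mem_pDiff hXfS _ hk)
  have hdev (k : ℕ) (hk : k ≤ N) :
      ‖traj fe (f xh (ustar 0)) uplus k - traj fe (fe xh (ustar 0)) uplus k‖ ≤ Lbar ^ k * η :=
    norm_traj_sub_le hL₀ hLip ((herr xh hxh _ (hadm.1 0 hN)).trans (min_le_right _ _)) k
      (fun i _ => hinputs i) (fun i hi => htube i (by omega))
  refine ⟨fun k _ => hinputs k, fun k _ hkN => ?_, ?_⟩
  · have h := mem_pDiff_sub_of_norm_sub_le
      (hadm.traj_shiftAppend_mem_pDiff hXfS _ hkN) (hdev k hkN.le)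
    rwa [cbar_succ, add_mul, add_sub_cancel_right] at h
  · subst hXf
    have hterm := qf_terminal_succ_le (c₁ := c₁) hQ hR hμdec hmargin hadm.2.2
    rw [← traj_shiftAppend_self (fe := fe) (u := ustar) hN] at hterm
    exact mem_of_mem_pDiff_of_norm_sub_le (hsub hterm) (hdev N le_rfl)

/-- One-step recursive feasibility. -/
theorem one_step_recursive_feasibility
    {n m M : ℕ} (S : Set (E n)) (U : Set (E m))
    (hScomp : IsCompact S) (hSconv : Convex ℝ S) (hS0 : (0 : E n) ∈ interior S)
    (hUcomp : IsCompact U) (hUconv : Convex ℝ U) (hU0 : (0 : E m) ∈ interior U)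
    (f fe : E n → E m → E n) (hf00 : f 0 0 = 0)
    (cx cu η : ℝ) (hcx : 0 ≤ cx) (hcu : 0 ≤ cu) (hη : 0 ≤ η)
    (herr : ∀ x ∈ S, ∀ u ∈ U, ‖f x u - fe x u‖ ≤ min (cx * ‖x‖ + cu * ‖u‖) η)
    (Lbar : ℝ) (hL : 1 ≤ Lbar)
    (hLip : ∀ u ∈ U, ∀ x ∈ S, ∀ y ∈ S, ‖fe x u - fe y u‖ ≤ Lbar * ‖x - y‖)
    (Q : Matrix (Fin n) (Fin n) ℝ) (R : Matrix (Fin m) (Fin m) ℝ)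
    (hQ : Q.PosDef) (hR : R.PosDef)
    (P : Matrix (Fin M) (Fin M) ℝ) (hP : P.PosDef)
    (Φ : E n → E M) (LΦ : ℝ) (hΦ : ∀ x y, ‖Φ x - Φ y‖ ≤ LΦ * ‖x - y‖) (hΦ0 : Φ 0 = 0)
    (c : ℝ) (hc : 0 < c) (N : ℕ) (hN : 1 ≤ N)
    (Xf : Set (E n)) (hXf : Xf = {x | qf P (Φ x) ≤ c})
    (hXfS : Xf ⊆ pDiff S (cbar Lbar N * η))
    (μ : E n → E m) (hμ0 : μ 0 = 0) (hμU : ∀ x ∈ Xf, μ x ∈ U)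
    (hμdec : ∀ x ∈ Xf,
      qf P (Φ (fe x (μ x))) - qf P (Φ x) ≤ -(qf Q x + qf R (μ x)))
    -- Assumption (iii): uniform decrease margin with sublevel set inside the
    -- tightened terminal set
    (hc₁ : ∃ c₁, 0 < c₁ ∧ c₁ < c ∧
      {x | qf P (Φ x) ≤ c₁} ⊆ pDiff Xf (Lbar ^ N * η) ∧
      ∀ x ∈ Xf, c₁ ≤ qf P (Φ x) →
        c - c₁ ≤ qf P (Φ x) - qf P (Φ (fe x (μ x))))
    (xh : E n) (hxh : xh ∈ S) (ustar : ℕ → E m)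
    (hadm : Admissible fe S Xf U η Lbar N xh ustar) :
    Admissible fe S Xf U η Lbar N (f xh (ustar 0))
      (fun k => if k + 1 < N then ustar (k + 1) else μ (traj fe xh ustar N)) :=
  one_step_recursive_feasibility_general S U f fe cx cu η hη herr Lbar hL hLip Q R hQ hR P Φ c N hN
    Xf hXf hXfS μ hμU hμdec hc₁ xh hxh ustar hadm
end
end

section
/- Proportional deviation bound between the one-step plant successor and the surrogate prediction: let x̂ ∈ S and u = (u₀, …, u_{N−1}) ∈ U^N. Define y_0 := f(x̂, u₀) and the surrogate trajectory x_1 := f^ε(x̂, u₀), x_{k+1} := f^ε(x_k, u_k), together with y_{i+1} := f^ε(y_i, u_{i+1}). If all states y_i and x_{i+1} involved lie in S, then ‖y_i − x_{i+1}‖ ≤ L̄^i (c_x‖x̂‖ + c_u‖u₀‖) for all i ∈ [0:N−1]. -/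
noncomputable section

/-- Proportional deviation bound between the one-step plant
successor and the surrogate prediction. -/
theorem proportional_deviation_bound
    {n m : ℕ} (S : Set (E n)) (U : Set (E m))
    (hScomp : IsCompact S) (hSconv : Convex ℝ S) (hS0 : (0 : E n) ∈ interior S)
    (hUcomp : IsCompact U) (hUconv : Convex ℝ U) (hU0 : (0 : E m) ∈ interior U)
    (f fe : E n → E m → E n) (hf00 : f 0 0 = 0)
    (cx cu η : ℝ) (hcx : 0 ≤ cx) (hcu : 0 ≤ cu) (hη : 0 ≤ η)
    (herr : ∀ x ∈ S, ∀ u ∈ U, ‖f x u - fe x u‖ ≤ min (cx * ‖x‖ + cu * ‖u‖) η)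
    (Lbar : ℝ) (hL : 1 ≤ Lbar)
    (hLip : ∀ u ∈ U, ∀ x ∈ S, ∀ y ∈ S, ‖fe x u - fe y u‖ ≤ Lbar * ‖x - y‖)
    (N : ℕ) (hN : 1 ≤ N) (xh : E n) (hxh : xh ∈ S)
    (u : ℕ → E m) (hu : ∀ k < N, u k ∈ U)
    (y : ℕ → E n) (hy0 : y 0 = f xh (u 0))
    (hyrec : ∀ i, y (i + 1) = fe (y i) (u (i + 1)))
    (hyS : ∀ i < N, y i ∈ S) (hxS : ∀ i < N, traj fe xh u (i + 1) ∈ S) :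
    ∀ i < N, ‖y i - traj fe xh u (i + 1)‖ ≤ Lbar ^ i * (cx * ‖xh‖ + cu * ‖u 0‖) := by
  intro i
  induction i with
  | zero =>
    intro h0
    simp only [pow_zero, one_mul, hy0, traj]
    exact (herr xh hxh (u 0) (hu 0 h0)).trans (min_le_left _ _)
  | succ i ih =>
    intro hi1
    have hi : i < N := Nat.lt_of_succ_lt hi1
    have prev := ih hi
    have hstep : ‖y (i + 1) - traj fe xh u (i + 2)‖ ≤ Lbar * ‖y i - traj fe xh u (i + 1)‖ := by
      rw [hyrec]
      show ‖fe (y i) (u (i+1)) - fe (traj fe xh u (i+1)) (u (i+1))‖ ≤ _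
      exact hLip (u (i+1)) (hu (i+1) hi1) (y i) (hyS i hi) _ (hxS i hi)
    calc ‖y (i + 1) - traj fe xh u (i + 2)‖ ≤ Lbar * ‖y i - traj fe xh u (i + 1)‖ := hstep
      _ ≤ Lbar * (Lbar ^ i * (cx * ‖xh‖ + cu * ‖u 0‖)) := by
          exact mul_le_mul_of_nonneg_left prev (le_trans zero_le_one hL)
      _ = Lbar ^ (i + 1) * (cx * ‖xh‖ + cu * ‖u 0‖) := by ring
end
end

section
/- Solvability of the discrete Lyapunov equation for Schur matrices: let A ∈ ℝ^{n×n} be such that every complex eigenvalue of A has modulus strictly less than 1, and let M ∈ ℝ^{n×n} be symmetric positive definite. Then the series P := Σ_{k=0}^∞ (Aᵀ)^k M A^k converges, P is symmetric positive definite, and AᵀPA − P = −M. -/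
/-!
The Schur condition says that the spectral radius of `A` (as a complex matrix) is below `1`, so
by Gelfand's formula `‖Aᵏ‖ ≤ rᵏ` eventually for some `r < 1`; in the Frobenius norm the same bound
holds for `(Aᵀ)ᵏ = (Aᵏ)ᵀ`, and the series is dominated by `‖M‖ (r²)ᵏ`. Its sum `P` satisfies the
Lyapunov equation because conjugating the series by `A` shifts it by one term, and `P` is
positive definite because its first term `M` is and all the others are positive semidefinite.
-/

open Matrix Filter
open scoped NNReal ENNReal

theorem spectrum.eventually_nnnorm_pow_le_of_spectralRadius_lt {A : Type*} [NormedRing A]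
    [NormedAlgebra ℂ A] [CompleteSpace A] {a : A} {r : ℝ≥0} (h : spectralRadius ℂ a < r) :
    ∀ᶠ k in atTop, ‖a ^ k‖₊ ≤ r ^ k := by
  filter_upwards [(pow_nnnorm_pow_one_div_tendsto_nhds_spectralRadius a).eventually_lt_const h,
    eventually_ne_atTop 0] with k hk hk0
  have hk' : ((‖a ^ k‖₊ : ℝ≥0∞) ^ (1 / k : ℝ)) ^ (k : ℝ) ≤ (r : ℝ≥0∞) ^ (k : ℝ) :=
    ENNReal.rpow_le_rpow hk.le k.cast_nonneg
  rw [← ENNReal.rpow_mul, one_div_mul_cancel (Nat.cast_ne_zero.mpr hk0), ENNReal.rpow_one,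
    ENNReal.rpow_natCast] at hk'
  exact_mod_cast hk'

theorem summable_pow_mul_mul_pow_of_norm_pow_le {R : Type*} [NormedRing R] [CompleteSpace R]
    {a b : R} {r : ℝ} (hr₀ : 0 ≤ r) (hr : r < 1) (ha : ∀ᶠ k in atTop, ‖a ^ k‖ ≤ r ^ k)
    (hb : ∀ᶠ k in atTop, ‖b ^ k‖ ≤ r ^ k) (m : R) :
    Summable fun k => b ^ k * m * a ^ k := by
  have hgeom : Summable fun k : ℕ => ‖m‖ * (r * r) ^ k :=
    (summable_geometric_of_lt_one (by positivity)
      (mul_lt_one_of_nonneg_of_lt_one_left hr₀ hr hr.le)).mul_left ‖m‖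
  refine Summable.of_norm_bounded_eventually_nat hgeom ?_
  filter_upwards [ha, hb] with k hak hbk
  calc ‖b ^ k * m * a ^ k‖ ≤ ‖b ^ k‖ * ‖m‖ * ‖a ^ k‖ := norm_mul₃_le
    _ ≤ r ^ k * ‖m‖ * r ^ k := by gcongr
    _ = ‖m‖ * (r * r) ^ k := by ring

theorem mul_mul_sub_eq_neg_of_hasSum_pow_mul_mul_pow {R : Type*} [Ring R] [TopologicalSpace R]
    [IsTopologicalRing R] [T2Space R] {a b m P : R}
    (hP : HasSum (fun k => b ^ k * m * a ^ k) P) :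
    b * P * a - P = -m := by
  have hshift : HasSum (fun k => b ^ (k + 1) * m * a ^ (k + 1)) (P - m) := by
    simpa using (hasSum_nat_add_iff' 1).mpr hP
  have hconj : HasSum (fun k => b ^ (k + 1) * m * a ^ (k + 1)) (b * P * a) := by
    have hstep : ∀ k, b * (b ^ k * m * a ^ k) * a = b ^ (k + 1) * m * a ^ (k + 1) := fun k => by
      rw [pow_succ', pow_succ]
      simp only [mul_assoc]
    simpa only [hstep] using (hP.mul_left b).mul_right a
  rw [hconj.unique hshift]
  abel

open scoped ComplexOrder in
theorem Matrix.PosSemidef.of_hasSum {ι n 𝕜 : Type*} [Fintype n] [RCLike 𝕜]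
    {f : ι → Matrix n n 𝕜} {P : Matrix n n 𝕜} (hP : HasSum f P) (hf : ∀ i, (f i).PosSemidef) :
    P.PosSemidef := by
  refine .of_dotProduct_mulVec_nonneg ?_ fun x => ?_
  · exact hP.matrix_conjTranspose.unique (by simpa only [(hf _).isHermitian.eq] using hP)
  · have hquad := hP.map
      (AddMonoidHom.mk' (fun Q : Matrix n n 𝕜 => star x ⬝ᵥ Q *ᵥ x) fun Q Q' => by
        simp [add_mulVec, dotProduct_add])
      (continuous_const.dotProduct (continuous_id.matrix_mulVec continuous_const))
    exact hquad.nonneg fun i => (hf i).dotProduct_mulVec_nonneg x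

section Frobenius

attribute [local instance] Matrix.frobeniusNormedRing Matrix.frobeniusNormedAlgebra

variable {n : Type*} [Fintype n] [DecidableEq n]

theorem Matrix.spectralRadius_lt_one_of_hasEigenvalue (B : Matrix n n ℂ)
    (h : ∀ μ : ℂ, Module.End.HasEigenvalue (toLin' B) μ → ‖μ‖ < 1) :
    spectralRadius ℂ B < 1 := by
  have hσ : ∀ μ ∈ spectrum ℂ B, ‖μ‖₊ < 1 := fun μ hμ => by
    exact_mod_cast h μ (by rwa [Module.End.hasEigenvalue_iff_mem_spectrum, spectrum_toLin'])
  rcases (spectrum ℂ B).eq_empty_or_nonempty with hempty | hne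
  · simp [spectralRadius, hempty]
  · simpa using spectrum.spectralRadius_lt_of_forall_lt_of_nonempty hne hσ

theorem Matrix.exists_frobenius_norm_pow_le (A : Matrix n n ℝ)
    (hA : spectralRadius ℂ (A.map Complex.ofReal) < 1) :
    ∃ r : ℝ, 0 ≤ r ∧ r < 1 ∧ ∀ᶠ k in atTop, ‖A ^ k‖ ≤ r ^ k := by
  obtain ⟨r, hAr, hr⟩ := ENNReal.lt_iff_exists_nnreal_btwn.mp hA
  refine ⟨r, r.coe_nonneg, by exact_mod_cast hr, ?_⟩
  filter_upwards [spectrum.eventually_nnnorm_pow_le_of_spectralRadius_lt hAr] with k hk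
  have hmap : (A.map Complex.ofReal) ^ k = (A ^ k).map Complex.ofReal :=
    (map_pow Complex.ofRealHom.mapMatrix A k).symm
  rw [hmap, frobenius_nnnorm_map_eq _ _ fun x => by simp] at hk
  exact_mod_cast hk

theorem Matrix.summable_transpose_pow_mul_mul_pow (A M : Matrix n n ℝ)
    (hA : spectralRadius ℂ (A.map Complex.ofReal) < 1) :
    Summable fun k => (Aᵀ) ^ k * M * A ^ k := by
  obtain ⟨r, hr₀, hr, hAr⟩ := A.exists_frobenius_norm_pow_le hA
  refine summable_pow_mul_mul_pow_of_norm_pow_le hr₀ hr hAr ?_ M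
  simpa only [← transpose_pow, frobenius_norm_transpose] using hAr

end Frobenius

/-- Solvability of the discrete Lyapunov equation for Schur
matrices. -/
theorem discrete_lyapunov_solvability
    {n : ℕ} (A : Matrix (Fin n) (Fin n) ℝ)
    (hA : ∀ μ : ℂ, Module.End.HasEigenvalue
      (Matrix.toLin' (A.map (Complex.ofReal : ℝ → ℂ))) μ → ‖μ‖ < 1)
    (M : Matrix (Fin n) (Fin n) ℝ) (hM : M.PosDef) :
    Summable (fun k : ℕ => (Aᵀ) ^ k * M * A ^ k) ∧
    (∑' k : ℕ, (Aᵀ) ^ k * M * A ^ k).PosDef ∧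
    Aᵀ * (∑' k : ℕ, (Aᵀ) ^ k * M * A ^ k) * A - (∑' k : ℕ, (Aᵀ) ^ k * M * A ^ k) = -M := by
  have hsum : Summable fun k : ℕ => (Aᵀ) ^ k * M * A ^ k :=
    A.summable_transpose_pow_mul_mul_pow M (spectralRadius_lt_one_of_hasEigenvalue _ hA)
  have hterm : ∀ k, ((Aᵀ) ^ k * M * A ^ k).PosSemidef := fun k => by
    simpa only [conjTranspose_eq_transpose_of_trivial, transpose_pow] using
      hM.posSemidef.conjTranspose_mul_mul_same (A ^ k)
  have htail : Summable fun k : ℕ => (Aᵀ) ^ (k + 1) * M * A ^ (k + 1) :=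
    (summable_nat_add_iff 1).mpr hsum
  refine ⟨hsum, ?_, mul_mul_sub_eq_neg_of_hasSum_pow_mul_mul_pow hsum.hasSum⟩
  rw [hsum.tsum_eq_zero_add]
  simpa using hM.add_posSemidef (PosSemidef.of_hasSum htail.hasSum fun k => hterm (k + 1))
end
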